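/- arXiv:2007.14334 — 6 statements merged into one kernel-verified Lean document; each statement's English description precedes it below -/
import Mathlib

section
/- Let ABC be a hyperbolic triangle (in the hyperbolic plane of curvature -1) with side lengths a, b, c. If all side lengths are multiplied by the same factor t > 1 (and the new lengths still form a triangle, which they do), then each angle of the new triangle is strictly smaller than the corresponding angle of the original triangle. -/
/-!
Writing `p = (a + b - c) / 2` and `q = (a - b + c) / 2`, the cosine law becomes
`cos A = 1 - 2 sinh p sinh q / (sinh b sinh c)`, where the triangle inequalities say exactly that
`0 < p < b` and `0 < q < c`. Scaling by `t > 1` decreases this ratio, because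
`u ↦ sinh (t u) / sinh u` is strictly increasing on `(0, ∞)`; so the cosine increases and the
angle decreases.
-/

open Real Set

/-- The angle opposite the side of length `a` in a hyperbolic triangle (curvature -1)
with side lengths `a`, `b`, `c`, via the hyperbolic cosine law
`cosh a = cosh b cosh c - sinh b sinh c cos A`. -/
noncomputable def hypAngle (a b c : ℝ) : ℝ :=
  Real.arccos ((Real.cosh b * Real.cosh c - Real.cosh a) / (Real.sinh b * Real.sinh c))

lemma cosh_mul_cosh_sub_cosh (x y z : ℝ) :
    cosh y * cosh z - cosh x =
      sinh y * sinh z - 2 * sinh ((x + y - z) / 2) * sinh ((x - y + z) / 2) := by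
  have hx : x = (x + y - z) / 2 + (x - y + z) / 2 := by ring
  have hyz : y - z = (x + y - z) / 2 - (x - y + z) / 2 := by ring
  have h := cosh_sub y z
  rw [hyz, cosh_sub] at h
  conv_lhs => rw [hx, cosh_add]
  linarith

lemma hypAngle_eq_arccos {x y z : ℝ} (hy : 0 < y) (hz : 0 < z) :
    hypAngle x y z = arccos (1 - 2 * (sinh ((x + y - z) / 2) * sinh ((x - y + z) / 2) /
      (sinh y * sinh z))) := by
  have hS : sinh y * sinh z ≠ 0 := by positivity
  rw [hypAngle, cosh_mul_cosh_sub_cosh]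
  field_simp

lemma sinh_mul_mul_cosh_lt_mul_cosh_mul_mul_sinh {t u : ℝ} (ht : 1 < t) (hu : 0 < u) :
    sinh (t * u) * cosh u < t * cosh (t * u) * sinh u := by
  let g : ℝ → ℝ := fun u ↦ t * cosh (t * u) * sinh u - sinh (t * u) * cosh u
  have hg : ∀ u, HasDerivAt g ((t ^ 2 - 1) * sinh (t * u) * sinh u) u := by
    intro u
    have htu : HasDerivAt (fun u ↦ t * u) t u := hasDerivAt_const_mul t
    exact (((htu.cosh.const_mul t).mul (hasDerivAt_sinh u)).sub
      (htu.sinh.mul (hasDerivAt_cosh u))).congr_deriv (by ring)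
  have hmono : StrictMonoOn g (Ici 0) := by
    refine strictMonoOn_of_deriv_pos (convex_Ici 0)
      (fun u _ ↦ (hg u).continuousAt.continuousWithinAt) fun v hv ↦ ?_
    rw [interior_Ici, mem_Ioi] at hv
    rw [(hg v).deriv]
    have : 0 < t := by linarith
    have : 0 < t ^ 2 - 1 := by nlinarith
    positivity
  have := hmono self_mem_Ici hu.le hu
  simp only [g, mul_zero, sinh_zero, cosh_zero, mul_one, sub_zero] at this
  linarith

lemma strictMonoOn_sinh_mul_div_sinh {t : ℝ} (ht : 1 < t) :
    StrictMonoOn (fun u ↦ sinh (t * u) / sinh u) (Ioi 0) := by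
  have hderiv : ∀ u, 0 < u → HasDerivAt (fun u ↦ sinh (t * u) / sinh u)
      ((t * cosh (t * u) * sinh u - sinh (t * u) * cosh u) / sinh u ^ 2) u := by
    intro u hu
    exact ((hasDerivAt_const_mul t).sinh.div (hasDerivAt_sinh u)
      (sinh_pos_iff.2 hu).ne').congr_deriv (by ring)
  refine strictMonoOn_of_deriv_pos (convex_Ioi 0)
    (fun u hu ↦ (hderiv u hu).continuousAt.continuousWithinAt) fun u hu ↦ ?_
  rw [interior_Ioi, mem_Ioi] at hu
  rw [(hderiv u hu).deriv]
  have := sinh_mul_mul_cosh_lt_mul_cosh_mul_mul_sinh ht hu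
  exact div_pos (by linarith) (by positivity)

lemma sinh_mul_sinh_div_sinh_mul_sinh_scale_lt {t p q y z : ℝ} (ht : 1 < t) (hp : 0 < p)
    (hq : 0 < q) (hpy : p < y) (hqz : q < z) :
    sinh (t * p) * sinh (t * q) / (sinh (t * y) * sinh (t * z)) <
      sinh p * sinh q / (sinh y * sinh z) := by
  have ht0 : 0 < t := by linarith
  have hy : 0 < y := hp.trans hpy
  have hz : 0 < z := hq.trans hqz
  have hfp := strictMonoOn_sinh_mul_div_sinh ht hp hy hpy
  have hfq := strictMonoOn_sinh_mul_div_sinh ht hq hz hqz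
  simp only at hfp hfq
  rw [div_lt_div_iff₀ (by positivity) (by positivity)]
  calc sinh (t * p) * sinh (t * q) * (sinh y * sinh z)
      = sinh (t * p) / sinh p * (sinh (t * q) / sinh q) *
          (sinh p * sinh q * (sinh y * sinh z)) := by field_simp
    _ < sinh (t * y) / sinh y * (sinh (t * z) / sinh z) *
          (sinh p * sinh q * (sinh y * sinh z)) := by gcongr
    _ = sinh p * sinh q * (sinh (t * y) * sinh (t * z)) := by field_simp

lemma hypAngle_mul_lt {x y z t : ℝ} (ht : 1 < t) (hx : x < y + z) (hy : y < x + z)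
    (hz : z < x + y) : hypAngle (t * x) (t * y) (t * z) < hypAngle x y z := by
  have ht0 : 0 < t := by linarith
  have hy0 : 0 < y := by linarith
  have hz0 : 0 < z := by linarith
  rw [hypAngle_eq_arccos hy0 hz0, hypAngle_eq_arccos (mul_pos ht0 hy0) (mul_pos ht0 hz0),
    show (t * x + t * y - t * z) / 2 = t * ((x + y - z) / 2) by ring,
    show (t * x - t * y + t * z) / 2 = t * ((x - y + z) / 2) by ring]
  have hp : 0 < (x + y - z) / 2 := by linarith
  have hq : 0 < (x - y + z) / 2 := by linarith
  have hpy : (x + y - z) / 2 < y := by linarith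
  have hqz : (x - y + z) / 2 < z := by linarith
  set p := (x + y - z) / 2
  set q := (x - y + z) / 2
  have hle : sinh p * sinh q / (sinh y * sinh z) ≤ 1 := by
    rw [div_le_one (by positivity)]
    exact mul_le_mul (sinh_le_sinh.2 hpy.le) (sinh_le_sinh.2 hqz.le) (by positivity)
      (by positivity)
  have hnonneg : 0 ≤ sinh (t * p) * sinh (t * q) / (sinh (t * y) * sinh (t * z)) := by
    positivity
  have hlt := sinh_mul_sinh_div_sinh_mul_sinh_scale_lt ht hp hq hpy hqz
  exact arccos_lt_arccos (by linarith) (by linarith) (by linarith)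

theorem scaled_hyperbolic_triangle_angles_decrease_general
    (a b c t : ℝ)
    (hab : a < b + c) (hbc : b < a + c) (hca : c < a + b) (ht : 1 < t) :
    hypAngle (t * a) (t * b) (t * c) < hypAngle a b c ∧
    hypAngle (t * b) (t * c) (t * a) < hypAngle b c a ∧
    hypAngle (t * c) (t * a) (t * b) < hypAngle c a b :=
  ⟨hypAngle_mul_lt ht hab hbc hca, hypAngle_mul_lt ht (by linarith) (by linarith) (by linarith),
    hypAngle_mul_lt ht (by linarith) (by linarith) (by linarith)⟩

/-- If all side lengths of a hyperbolic triangle are multiplied by the same factor `t > 1`,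
then each angle of the new triangle is strictly smaller than the corresponding angle of
the original triangle. -/
theorem scaled_hyperbolic_triangle_angles_decrease
    (a b c t : ℝ) (ha : 0 < a) (hb : 0 < b) (hc : 0 < c)
    (hab : a < b + c) (hbc : b < a + c) (hca : c < a + b) (ht : 1 < t) :
    hypAngle (t * a) (t * b) (t * c) < hypAngle a b c ∧
    hypAngle (t * b) (t * c) (t * a) < hypAngle b c a ∧
    hypAngle (t * c) (t * a) (t * b) < hypAngle c a b :=
  scaled_hyperbolic_triangle_angles_decrease_general a b c t hab hbc hca ht
end

section
/- For every Δ > 0, set η(Δ) = 2·arcsin(1/(√2·cosh(Δ/2))), which lies in (0, π/2). Then for any numbers a ∈ (0, Δ) and β, γ > 0 with β + γ < η(Δ), there exists a hyperbolic triangle ABC with BC = a, angle B = β, and angle C = γ; moreover the angle at A is strictly greater than π/2. -/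
open Real

/-! Put `s = sin ((β + γ) / 2)`. Since `sin β sin γ ≤ s²` and `cosh a - 1 ≥ 0`, the half-angle
formulas give `-cos β cos γ + sin β sin γ cosh a ≤ 2 (s cosh (a / 2))² - 1`. The hypothesis
`β + γ < η(Δ)` means `s < 1 / (√2 cosh (Δ / 2))`, so for `a < Δ` the right side is negative and the
angle at `A` is obtuse; positivity of `sin β sin γ cosh a` keeps the quantity above `-1`. -/

/-- The right-hand side of the dual cosine law in `H²`. -/
noncomputable def dualCosine (a β γ : ℝ) : ℝ :=
  -cos β * cos γ + sin β * sin γ * cosh a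

theorem cos_eq_one_sub_two_mul_sin_half_sq (x : ℝ) : cos x = 1 - 2 * sin (x / 2) ^ 2 := by
  have h := cos_two_mul' (x / 2)
  rw [mul_div_cancel₀ x two_ne_zero] at h
  nlinarith [sin_sq_add_cos_sq (x / 2)]

theorem cosh_eq_two_mul_cosh_half_sq_sub_one (x : ℝ) : cosh x = 2 * cosh (x / 2) ^ 2 - 1 := by
  have h := cosh_two_mul (x / 2)
  rw [mul_div_cancel₀ x two_ne_zero] at h
  nlinarith [cosh_sq_sub_sinh_sq (x / 2)]

theorem sin_mul_sin_le_sin_half_add_sq (x y : ℝ) :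
    sin x * sin y ≤ sin ((x + y) / 2) ^ 2 := by
  nlinarith [cos_sub x y, cos_add x y, cos_le_one (x - y),
    cos_eq_one_sub_two_mul_sin_half_sq (x + y)]

theorem dualCosine_le (a β γ : ℝ) :
    dualCosine a β γ ≤ 2 * (sin ((β + γ) / 2) * cosh (a / 2)) ^ 2 - 1 := by
  have hprod := mul_le_mul_of_nonneg_right (sin_mul_sin_le_sin_half_add_sq β γ)
    (sub_nonneg.2 (one_le_cosh a))
  unfold dualCosine
  nlinarith [cos_add β γ, cos_eq_one_sub_two_mul_sin_half_sq (β + γ),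
    cosh_eq_two_mul_cosh_half_sq_sub_one a]

theorem dualCosine_neg {a β γ : ℝ} (h0 : 0 ≤ sin ((β + γ) / 2))
    (h : sin ((β + γ) / 2) * cosh (a / 2) < √2 / 2) : dualCosine a β γ < 0 := by
  have hsq : (sin ((β + γ) / 2) * cosh (a / 2)) ^ 2 < (√2 / 2) ^ 2 :=
    pow_lt_pow_left₀ h (mul_nonneg h0 (cosh_pos _).le) two_ne_zero
  rw [div_pow, sq_sqrt zero_le_two] at hsq
  linarith [dualCosine_le a β γ]

theorem neg_one_lt_dualCosine (a : ℝ) {β γ : ℝ} (h : 0 < sin β * sin γ) :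
    -1 < dualCosine a β γ := by
  unfold dualCosine
  nlinarith [mul_pos h (cosh_pos a), neg_one_le_cos β, cos_le_one β, neg_one_le_cos γ,
    cos_le_one γ]

theorem pi_div_two_lt_arccos_iff {x : ℝ} : π / 2 < arccos x ↔ x < 0 := by
  rw [← not_le, arccos_le_pi_div_two, not_le]

theorem one_div_sqrt_two_mul_cosh_mem_Ioo {t : ℝ} (ht : t ≠ 0) :
    1 / (√2 * cosh t) ∈ Set.Ioo 0 (√2 / 2) := by
  have hc : 1 < cosh t := one_lt_cosh.2 ht
  refine ⟨by positivity, ?_⟩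
  rw [div_lt_div_iff₀ (by positivity) two_pos]
  nlinarith [mul_self_sqrt (zero_le_two : (0:ℝ) ≤ 2)]

theorem arcsin_mem_Ioo_zero_pi_div_four {u : ℝ} (hu : u ∈ Set.Ioo 0 (√2 / 2)) :
    arcsin u ∈ Set.Ioo 0 (π / 4) := by
  refine ⟨arcsin_pos.2 hu.1, ?_⟩
  rw [arcsin_lt_iff_lt_sin' ⟨by linarith [pi_pos], by linarith [pi_pos]⟩, sin_pi_div_four]
  exact hu.2

/-- For every `Δ > 0`, set `η(Δ) = 2·arcsin(1/(√2·cosh(Δ/2)))`, which lies in `(0, π/2)`.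
Then for any `a ∈ (0, Δ)` and `β, γ > 0` with `β + γ < η(Δ)`, there exists a hyperbolic
triangle `ABC` with `BC = a`, angle `B = β`, angle `C = γ` (a triangle with these data exists
iff `-cos β cos γ + sin β sin γ cosh a ∈ (-1, 1)`, and then the angle at `A` is
`arccos (-cos β cos γ + sin β sin γ cosh a)` by the dual cosine law); moreover the angle at
`A` is strictly greater than `π/2`. -/
theorem exists_hyperbolic_triangle_obtuse (Δ : ℝ) (hΔ : 0 < Δ) :
    (2 * Real.arcsin (1 / (Real.sqrt 2 * Real.cosh (Δ / 2))) ∈ Set.Ioo 0 (π / 2)) ∧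
    ∀ a β γ : ℝ, a ∈ Set.Ioo 0 Δ → 0 < β → 0 < γ →
      β + γ < 2 * Real.arcsin (1 / (Real.sqrt 2 * Real.cosh (Δ / 2))) →
      (-Real.cos β * Real.cos γ + Real.sin β * Real.sin γ * Real.cosh a ∈ Set.Ioo (-1 : ℝ) 1) ∧
      Real.arccos (-Real.cos β * Real.cos γ + Real.sin β * Real.sin γ * Real.cosh a) > π / 2 := by
  set u := 1 / (√2 * cosh (Δ / 2))
  have hu := one_div_sqrt_two_mul_cosh_mem_Ioo (half_pos hΔ).ne'
  obtain ⟨harc_pos, harc_lt⟩ := arcsin_mem_Ioo_zero_pi_div_four hu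
  refine ⟨⟨by linarith, by linarith⟩, ?_⟩
  rintro a β γ ⟨ha0, haΔ⟩ hβ hγ hsum
  have hpi := pi_pos
  have hsin : 0 < sin β * sin γ :=
    mul_pos (sin_pos_of_pos_of_lt_pi hβ (by linarith)) (sin_pos_of_pos_of_lt_pi hγ (by linarith))
  have hs0 : 0 ≤ sin ((β + γ) / 2) := sin_nonneg_of_nonneg_of_le_pi (by positivity) (by linarith)
  have hs : sin ((β + γ) / 2) < u :=
    (lt_arcsin_iff_sin_lt' ⟨by linarith, by linarith⟩).1 (by linarith)
  have hcosh : cosh (a / 2) < cosh (Δ / 2) := by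
    rw [cosh_lt_cosh, abs_of_pos (half_pos ha0), abs_of_pos (half_pos hΔ)]
    linarith
  have hkey : sin ((β + γ) / 2) * cosh (a / 2) < √2 / 2 := calc
    sin ((β + γ) / 2) * cosh (a / 2) ≤ sin ((β + γ) / 2) * cosh (Δ / 2) := by gcongr
    _ < u * cosh (Δ / 2) := by gcongr
    _ = √2 / 2 := by
      rw [one_div_mul_eq_div, mul_comm, ← div_div, div_self (cosh_pos _).ne', sqrt_div_self']
  have hneg := dualCosine_neg hs0 hkey
  exact ⟨⟨neg_one_lt_dualCosine a hsin, hneg.trans one_pos⟩, pi_div_two_lt_arccos_iff.2 hneg⟩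
end

section
/- Let ABC be a hyperbolic triangle with sides a, b, c opposite to angles α, β, γ respectively, and suppose α > π/2. Then π - α < β + γ·cosh a. -/
open Real

/-!
Put `δ = π - α` and `u = β + γ`, so `0 < u < δ < π/2`. The dual cosine law says
`cos u - cos δ = sin β sin γ (cosh a - 1)`. Since `cos` is strictly concave on `[0, π/2]`, the left
side exceeds `(δ - u) sin u`, while `sin β sin γ ≤ γ sin u`; dividing by `sin u > 0` gives
`δ - u < γ (cosh a - 1)`.
-/

namespace Real

theorem mul_sin_lt_cos_sub_cos {u δ : ℝ} (hu : -(π / 2) ≤ u) (huδ : u < δ) (hδ : δ ≤ π / 2) :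
    (δ - u) * sin u < cos u - cos δ := by
  have hslope := strictConcaveOn_cos_Icc.slope_lt_of_hasDerivAt ⟨hu, by linarith⟩
    ⟨by linarith, hδ⟩ huδ (hasDerivAt_cos u)
  rw [slope_def_field, div_lt_iff₀ (sub_pos.mpr huδ)] at hslope
  linarith

theorem sin_mul_sin_le_mul_sin_add {β γ : ℝ} (hβ : 0 ≤ β) (hγ : 0 ≤ γ) (hβγ : β + γ ≤ π / 2) :
    sin β * sin γ ≤ γ * sin (β + γ) :=
  calc sin β * sin γ ≤ sin β * γ :=
        mul_le_mul_of_nonneg_left (sin_le hγ) (sin_nonneg_of_nonneg_of_le_pi hβ (by linarith))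
    _ ≤ sin (β + γ) * γ :=
        mul_le_mul_of_nonneg_right
          (sin_le_sin_of_le_of_le_pi_div_two (by linarith) hβγ (by linarith)) hγ
    _ = γ * sin (β + γ) := mul_comm _ _

end Real

theorem obtuse_hyperbolic_triangle_angle_bound_general
    (a α β γ : ℝ) (hβ : 0 < β) (hγ : 0 < γ)
    (hsum : α + β + γ < π)
    (hdual : Real.cos α = -Real.cos β * Real.cos γ + Real.sin β * Real.sin γ * Real.cosh a)
    (hα : π / 2 < α) :
    π - α < β + γ * Real.cosh a := by
  have hcos_gap : cos (β + γ) - cos (π - α) = sin β * sin γ * (cosh a - 1) := by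
    rw [cos_add, cos_pi_sub, hdual]
    ring
  have hconcave : (π - α - (β + γ)) * sin (β + γ) < sin β * sin γ * (cosh a - 1) :=
    hcos_gap ▸ mul_sin_lt_cos_sub_cos (by linarith) (by linarith) (by linarith)
  have hsin_prod : sin β * sin γ * (cosh a - 1) ≤ γ * sin (β + γ) * (cosh a - 1) :=
    mul_le_mul_of_nonneg_right (sin_mul_sin_le_mul_sin_add hβ.le hγ.le (by linarith))
      (sub_nonneg.mpr (one_le_cosh a))
  have hsin_pos : 0 < sin (β + γ) := sin_pos_of_pos_of_lt_pi (by linarith) (by linarith)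
  have hexcess : π - α - (β + γ) < γ * (cosh a - 1) := by
    rw [← mul_lt_mul_iff_left₀ hsin_pos]
    linarith
  linarith

/-- Let `ABC` be a hyperbolic triangle with sides `a, b, c` opposite to angles `α, β, γ`,
with `α > π/2`.  (The angles of a hyperbolic triangle are positive, sum to less than `π`,
and satisfy the dual cosine law `cos α = -cos β cos γ + sin β sin γ cosh a`.)
Then `π - α < β + γ·cosh a`. -/
theorem obtuse_hyperbolic_triangle_angle_bound
    (a α β γ : ℝ) (ha : 0 < a) (hβ : 0 < β) (hγ : 0 < γ)
    (hsum : α + β + γ < π)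
    (hdual : Real.cos α = -Real.cos β * Real.cos γ + Real.sin β * Real.sin γ * Real.cosh a)
    (hα : π / 2 < α) (hα' : α < π) :
    π - α < β + γ * Real.cosh a :=
  obtuse_hyperbolic_triangle_angle_bound_general a α β γ hβ hγ hsum hdual hα
end

section
/- In a hyperbolic trapezoid with upper edge length l, lower edge length a, lateral edge lengths h1, h2, and upper angles α12 (at A1) and α21 (at A2), the sine law holds: sinh a / sinh l = sin α12 / cosh h2 = sin α21 / cosh h1. -/
open Real

/-! Hyperboloid model of the hyperbolic plane `H²` of curvature `-1`:
points are `p : ℝ × ℝ × ℝ` with `mink p p = 1` and `p.1 > 0`, where `mink` is the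
Minkowski bilinear form of signature `(+,-,-)`.  Distances satisfy
`cosh (hdist p q) = mink p q` and angles are computed by the hyperbolic cosine law. -/

/-- Minkowski bilinear form on `ℝ^{1,2}`. -/
def mink (p q : ℝ × ℝ × ℝ) : ℝ := p.1 * q.1 - p.2.1 * q.2.1 - p.2.2 * q.2.2

/-- Inverse hyperbolic cosine. -/
noncomputable def arcosh (x : ℝ) : ℝ := Real.log (x + Real.sqrt (x ^ 2 - 1))

/-- Hyperbolic distance between points of the hyperboloid. -/
noncomputable def hdist (p q : ℝ × ℝ × ℝ) : ℝ := _root_.arcosh (mink p q)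

/-- Angle at `p` between the geodesic segments from `p` to `q` and from `p` to `r`. -/
noncomputable def hangle (p q r : ℝ × ℝ × ℝ) : ℝ :=
  Real.arccos ((mink p q * mink p r - mink q r) /
    (Real.sqrt (mink p q ^ 2 - 1) * Real.sqrt (mink p r ^ 2 - 1)))

/-- The point at signed arclength `s` along the base geodesic line `{x₂ = 0}` (the "lower
line"), moved to (signed) height `h` along the perpendicular at that point. -/
noncomputable def Pt (s h : ℝ) : ℝ × ℝ × ℝ :=
  (Real.cosh s * Real.cosh h, Real.sinh s * Real.cosh h, Real.sinh h)

/-! The upper angle `α₁₂` at `A₁` is an angle of the triangle `A₁A₂B₁`. For any triangle `pqr`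
on the hyperboloid, `sin ∠p · sinh |pq| · sinh |pr|` is the square root of the Gram determinant
of `p, q, r` (the cosine law squared, rearranged). For `A₁A₂B₁` that determinant is
`(sinh h₁ · sinh a · cosh h₂)²`, and since `|A₁B₁| = h₁` the factor `sinh h₁` cancels, leaving
`sin α₁₂ · sinh l = sinh a · cosh h₂`. The angle `α₂₁` is handled symmetrically. -/

lemma hdist_eq_arcosh (p q : ℝ × ℝ × ℝ) : hdist p q = Real.arcosh (mink p q) := rfl

lemma mink_comm (p q : ℝ × ℝ × ℝ) : mink p q = mink q p := by
  unfold mink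
  ring

lemma hdist_comm (p q : ℝ × ℝ × ℝ) : hdist p q = hdist q p := by
  rw [hdist, hdist, mink_comm]

lemma sinh_hdist {p q : ℝ × ℝ × ℝ} (h : 1 ≤ mink p q) :
    sinh (hdist p q) = √(mink p q ^ 2 - 1) := by
  rw [hdist_eq_arcosh, sinh_arcosh h]

lemma sinh_hdist_pos {p q : ℝ × ℝ × ℝ} (h : 1 < mink p q) : 0 < sinh (hdist p q) := by
  rw [sinh_hdist h.le, sqrt_pos]
  nlinarith

lemma sinh_hdist_of_mink_eq_cosh {p q : ℝ × ℝ × ℝ} {x : ℝ} (h : mink p q = cosh x) :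
    sinh (hdist p q) = |sinh x| := by
  rw [sinh_hdist (h ▸ one_le_cosh x), h, cosh_sq, add_sub_cancel_right, sqrt_sq_eq_abs]

/-- The Gram determinant of `p, q, r` with respect to `mink`, for points with
`mink p p = mink q q = mink r r = 1`. -/
def minkGram (p q r : ℝ × ℝ × ℝ) : ℝ :=
  1 + 2 * mink p q * mink p r * mink q r - mink p q ^ 2 - mink p r ^ 2 - mink q r ^ 2

lemma sin_hangle_mul_sinh_hdist_mul_sinh_hdist {p q r : ℝ × ℝ × ℝ}
    (hq : 1 < mink p q) (hr : 1 < mink p r) :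
    sin (hangle p q r) * sinh (hdist p q) * sinh (hdist p r) = √(minkGram p q r) := by
  have hq' : 0 < mink p q ^ 2 - 1 := by nlinarith
  have hr' : 0 < mink p r ^ 2 - 1 := by nlinarith
  rw [hangle, sin_arccos, sinh_hdist hq.le, sinh_hdist hr.le, ← sqrt_mul' _ hq'.le,
    ← sqrt_mul' _ hr'.le, div_pow, mul_pow, sq_sqrt hq'.le, sq_sqrt hr'.le]
  congr 1
  field_simp
  rw [minkGram]
  ring

lemma mink_Pt (s h t k : ℝ) :
    mink (Pt s h) (Pt t k) = cosh h * cosh k * cosh (t - s) - sinh h * sinh k := by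
  simp only [mink, Pt, cosh_sub]
  ring

lemma mink_Pt_foot (s h : ℝ) : mink (Pt s h) (Pt s 0) = cosh h := by
  simp [mink_Pt]

lemma one_lt_mink_Pt {s t : ℝ} (hst : s ≠ t) (h k : ℝ) : 1 < mink (Pt s h) (Pt t k) := by
  have hd : 1 < cosh (t - s) := one_lt_cosh.2 (sub_ne_zero.2 hst.symm)
  have hhk : cosh h * cosh k - sinh h * sinh k = cosh (h - k) := (cosh_sub h k).symm
  rw [mink_Pt]
  nlinarith [one_le_cosh (h - k), mul_pos (cosh_pos h) (cosh_pos k)]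

lemma minkGram_Pt (s h t k : ℝ) :
    minkGram (Pt s h) (Pt t k) (Pt s 0) = (sinh h * sinh (t - s) * cosh k) ^ 2 := by
  have hst : cosh (s - t) = cosh (t - s) := by rw [← neg_sub, cosh_neg]
  rw [minkGram, mink_Pt, mink_Pt_foot, mink_Pt, hst]
  simp only [cosh_zero, sinh_zero, mul_one, mul_zero, sub_zero]
  set d := t - s
  linear_combination
    (sinh h ^ 2 * (cosh k ^ 2 * cosh d ^ 2 - sinh k ^ 2)
      + (cosh h * cosh k * cosh d - sinh h * sinh k) ^ 2 - 1
      - 2 * sinh h * (sinh h * cosh k * cosh d - cosh h * sinh k) * cosh k * cosh d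
      - cosh k ^ 2 * cosh d ^ 2 * (cosh h ^ 2 - sinh h ^ 2 - 1)) * cosh_sq h
    + sinh h ^ 2 * cosh_sq k + sinh h ^ 2 * cosh k ^ 2 * cosh_sq d

lemma sin_hangle_Pt_mul_sinh_hdist {s t h : ℝ} (hst : s ≠ t) (hh : h ≠ 0) (k : ℝ) :
    sin (hangle (Pt s h) (Pt t k) (Pt s 0)) * sinh (hdist (Pt s h) (Pt t k)) =
      |sinh (t - s)| * cosh k := by
  have hfoot : 1 < mink (Pt s h) (Pt s 0) := by
    rw [mink_Pt_foot]
    exact one_lt_cosh.2 hh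
  have key := sin_hangle_mul_sinh_hdist_mul_sinh_hdist (one_lt_mink_Pt hst h k) hfoot
  rw [minkGram_Pt, sqrt_sq_eq_abs, sinh_hdist_of_mink_eq_cosh (mink_Pt_foot s h), abs_mul,
    abs_mul, abs_of_pos (cosh_pos k)] at key
  have hsinh : |sinh h| ≠ 0 := abs_ne_zero.2 (sinh_ne_zero.2 hh)
  apply mul_right_cancel₀ hsinh
  rw [key]
  ring

/-- `B₁ = Pt 0 0`, `B₂ = Pt a 0`, `A₁ = Pt 0 h₁`, `A₂ = Pt a h₂`. -/
theorem trapezoid_sine_law (a h₁ h₂ : ℝ) (ha : 0 < a) (h1 : 0 < h₁) (h2 : 0 < h₂) :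
    Real.sinh (hdist (Pt 0 0) (Pt a 0)) / Real.sinh (hdist (Pt 0 h₁) (Pt a h₂)) =
      Real.sin (hangle (Pt 0 h₁) (Pt a h₂) (Pt 0 0)) / Real.cosh h₂ ∧
    Real.sinh (hdist (Pt 0 0) (Pt a 0)) / Real.sinh (hdist (Pt 0 h₁) (Pt a h₂)) =
      Real.sin (hangle (Pt a h₂) (Pt 0 h₁) (Pt a 0)) / Real.cosh h₁ := by
  have hsinh_a : |sinh a| = sinh a := abs_of_pos (sinh_pos_iff.2 ha)
  have hlower : sinh (hdist (Pt 0 0) (Pt a 0)) = sinh a := by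
    rw [sinh_hdist_of_mink_eq_cosh (x := a) (by simp [mink_Pt]), hsinh_a]
  have hupper : sinh (hdist (Pt 0 h₁) (Pt a h₂)) ≠ 0 :=
    (sinh_hdist_pos (one_lt_mink_Pt ha.ne h₁ h₂)).ne'
  have hα₁₂ := sin_hangle_Pt_mul_sinh_hdist ha.ne h1.ne' h₂
  have hα₂₁ := sin_hangle_Pt_mul_sinh_hdist ha.ne' h2.ne' h₁
  rw [sub_zero, hsinh_a] at hα₁₂
  rw [hdist_comm, zero_sub, sinh_neg, abs_neg, hsinh_a] at hα₂₁
  rw [hlower, div_eq_div_iff hupper (cosh_pos _).ne', div_eq_div_iff hupper (cosh_pos _).ne',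
    hα₁₂, hα₂₁]
  exact ⟨rfl, rfl⟩
end

section
/- Let I ⊆ ℝ be an interval and f: I → ℝ a continuous function. Suppose I is subdivided into finitely many consecutive subintervals [x_i, x_{i+1}], on each of which f coincides with a function of the form A·cosh x + B·sinh x, and suppose that at each interior breakpoint x_i the left derivative of f is greater than or equal to the right derivative. Then f is F(-1)-concave: for any [x', x''] ⊆ I, if g(x) = A cosh x + B sinh x satisfies g(x') = f(x') and g(x'') = f(x''), then f(x) ≥ g(x) for all x ∈ [x', x'']. -/
/-! Let `h = f - g`. If `h` had a negative minimum on `[x', x'']`, it would be attained at an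
interior point `y₀`. Near `y₀` each piece of `h` is itself an `F(-1)` function, and
`φ(y₀ + t) = φ(y₀) cosh t + φ'(y₀) sinh t` with `cosh t > 1` forces the right slope of `h`
at `y₀` to be positive and the left slope to be negative. This contradicts the hypothesis that
the left derivative dominates the right one (with equality inside a piece). -/

open Real Set

/-- `coshSinh Q P` is the derivative of `coshSinh P Q`. -/
noncomputable def coshSinh (P Q y : ℝ) : ℝ := P * cosh y + Q * sinh y

theorem coshSinh_add (P Q a t : ℝ) :
    coshSinh P Q (a + t) = coshSinh (coshSinh P Q a) (coshSinh Q P a) t := by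
  simp only [coshSinh, cosh_add, sinh_add]
  ring

theorem exists_le_lt_succ_of_le_of_lt {α : Type*} [LinearOrder α] {x : ℕ → α} {n : ℕ}
    {y : α} (h0 : x 0 ≤ y) (hn : y < x n) : ∃ i < n, x i ≤ y ∧ y < x (i + 1) := by
  classical
  have hex : ∃ m, y < x m := ⟨n, hn⟩
  have hm : Nat.find hex ≠ 0 := fun h => (Nat.find_spec hex).not_ge (h ▸ h0)
  obtain ⟨i, hi⟩ := Nat.exists_eq_succ_of_ne_zero hm
  refine ⟨i, ?_, not_lt.mp (Nat.find_min hex (by omega)), ?_⟩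
  · have := Nat.find_min' hex hn
    omega
  · simpa [hi] using Nat.find_spec hex

section MinOfPiece

variable {h : ℝ → ℝ} {s : Set ℝ} {y₀ P Q : ℝ}

theorem slope_mul_sinh_pos_of_isMinOn {t : ℝ} (hmin : IsMinOn h s y₀) (hneg : h y₀ < 0)
    (ht : t ≠ 0) (hmem : y₀ + t ∈ s) (hy₀ : h y₀ = coshSinh P Q y₀)
    (hyt : h (y₀ + t) = coshSinh P Q (y₀ + t)) : 0 < coshSinh Q P y₀ * sinh t := by
  have hle : h y₀ ≤ h (y₀ + t) := hmin hmem
  rw [hyt, coshSinh_add, ← hy₀, coshSinh] at hle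
  have hcosh : 1 < cosh t := one_lt_cosh.mpr ht
  nlinarith

theorem slope_pos_of_isMinOn_Icc {a b c : ℝ} (hmin : IsMinOn h (Icc a b) y₀)
    (hneg : h y₀ < 0) (ha : a ≤ y₀) (hb : y₀ < b) (hc : y₀ < c)
    (hpiece : ∀ y ∈ Icc y₀ c, h y = coshSinh P Q y) : 0 < coshSinh Q P y₀ := by
  set t := min (b - y₀) (c - y₀)
  have ht : 0 < t := lt_min (by linarith) (by linarith)
  have htb : t ≤ b - y₀ := min_le_left _ _
  have htc : t ≤ c - y₀ := min_le_right _ _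
  have hpos := slope_mul_sinh_pos_of_isMinOn hmin hneg ht.ne' ⟨by linarith, by linarith⟩
    (hpiece y₀ ⟨le_rfl, hc.le⟩) (hpiece _ ⟨by linarith, by linarith⟩)
  exact pos_of_mul_pos_left hpos (sinh_pos_iff.mpr ht).le

theorem slope_neg_of_isMinOn_Icc {a b c : ℝ} (hmin : IsMinOn h (Icc a b) y₀)
    (hneg : h y₀ < 0) (ha : a < y₀) (hb : y₀ ≤ b) (hc : c < y₀)
    (hpiece : ∀ y ∈ Icc c y₀, h y = coshSinh P Q y) : coshSinh Q P y₀ < 0 := by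
  set t := min (y₀ - a) (y₀ - c)
  have ht : 0 < t := lt_min (by linarith) (by linarith)
  have hta : t ≤ y₀ - a := min_le_left _ _
  have htc : t ≤ y₀ - c := min_le_right _ _
  have hpos := slope_mul_sinh_pos_of_isMinOn (t := -t) hmin hneg (neg_ne_zero.mpr ht.ne')
    ⟨by linarith, by linarith⟩ (hpiece y₀ ⟨hc.le, le_rfl⟩)
    (hpiece _ ⟨by linarith, by linarith⟩)
  exact neg_of_mul_pos_left hpos (sinh_nonpos_iff.mpr (by linarith))

end MinOfPiece

theorem piecewise_F_neg_one_concave_general (n : ℕ) (x : ℕ → ℝ) (f : ℝ → ℝ) (A B : ℕ → ℝ)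
    (hx : ∀ i < n, x i < x (i + 1))
    (hf : ContinuousOn f (Set.Icc (x 0) (x n)))
    (hpiece : ∀ i < n, ∀ y ∈ Set.Icc (x i) (x (i + 1)),
      f y = A i * Real.cosh y + B i * Real.sinh y)
    (hkink : ∀ i, 1 ≤ i → i < n →
      A i * Real.sinh (x i) + B i * Real.cosh (x i) ≤
        A (i - 1) * Real.sinh (x i) + B (i - 1) * Real.cosh (x i)) :
    ∀ x' x'' : ℝ, x 0 ≤ x' → x' ≤ x'' → x'' ≤ x n →
      ∀ C D : ℝ, C * Real.cosh x' + D * Real.sinh x' = f x' →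
        C * Real.cosh x'' + D * Real.sinh x'' = f x'' →
        ∀ y ∈ Set.Icc x' x'', C * Real.cosh y + D * Real.sinh y ≤ f y := by
  intro x' x'' h0 h12 h2n C D hC1 hC2
  set h : ℝ → ℝ := fun y => f y - coshSinh C D y
  have hdiff : ∀ i < n, ∀ y ∈ Icc (x i) (x (i + 1)), h y = coshSinh (A i - C) (B i - D) y :=
    fun i hi y hy => by simp only [h, coshSinh, hpiece i hi y hy]; ring
  have hcont : ContinuousOn h (Icc x' x'') :=
    (hf.mono (Icc_subset_Icc h0 h2n)).sub (by unfold coshSinh; fun_prop)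
  obtain ⟨y₀, hy₀, hmin⟩ := isCompact_Icc.exists_isMinOn (nonempty_Icc.mpr h12) hcont
  suffices 0 ≤ h y₀ from fun y hy => sub_nonneg.mp (this.trans (hmin hy))
  by_contra! hneg
  have hl : x' < y₀ := hy₀.1.lt_of_ne fun e => by simp [h, ← e, coshSinh, hC1] at hneg
  have hr : y₀ < x'' := hy₀.2.lt_of_ne fun e => by simp [h, e, coshSinh, hC2] at hneg
  obtain ⟨i, hi, hxi, hxi1⟩ :=
    exists_le_lt_succ_of_le_of_lt (h0.trans hy₀.1) (hr.trans_le h2n)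
  have hR := slope_pos_of_isMinOn_Icc hmin hneg hy₀.1 hr hxi1
    fun y hy => hdiff i hi y ⟨hxi.trans hy.1, hy.2⟩
  rcases hxi.lt_or_eq with hlt | rfl
  · have hL := slope_neg_of_isMinOn_Icc hmin hneg hl hy₀.2 hlt
      fun y hy => hdiff i hi y ⟨hy.1, hy.2.trans hxi1.le⟩
    linarith
  · have hi0 : i ≠ 0 := by rintro rfl; linarith
    obtain ⟨j, rfl⟩ := Nat.exists_eq_succ_of_ne_zero hi0
    have hL := slope_neg_of_isMinOn_Icc hmin hneg hl hy₀.2 (hx j (by omega))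
      fun y hy => hdiff j (by omega) y hy
    have hk := hkink (j + 1) (by omega) hi
    simp only [coshSinh, add_tsub_cancel_right] at hR hL hk
    linarith

/-- Let `f` be continuous on `[x₀, x_n]`, which is subdivided into finitely many consecutive
subintervals `[x_i, x_{i+1}]`, on each of which `f` coincides with a function
`y ↦ A i cosh y + B i sinh y` (an element of `F(-1)`), and suppose at each interior
breakpoint `x_i` the left derivative of `f` is at least the right derivative (i.e.
`A (i-1) sinh (x i) + B (i-1) cosh (x i) ≥ A i sinh (x i) + B i cosh (x i)`).
Then `f` is `F(-1)`-concave: for any `[x', x''] ⊆ [x₀, x_n]`, if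
`g(y) = C cosh y + D sinh y` satisfies `g x' = f x'` and `g x'' = f x''`, then `f ≥ g` on
`[x', x'']`. -/
theorem piecewise_F_neg_one_concave (n : ℕ) (hn : 0 < n) (x : ℕ → ℝ) (f : ℝ → ℝ) (A B : ℕ → ℝ)
    (hx : ∀ i < n, x i < x (i + 1))
    (hf : ContinuousOn f (Set.Icc (x 0) (x n)))
    (hpiece : ∀ i < n, ∀ y ∈ Set.Icc (x i) (x (i + 1)),
      f y = A i * Real.cosh y + B i * Real.sinh y)
    (hkink : ∀ i, 1 ≤ i → i < n →
      A i * Real.sinh (x i) + B i * Real.cosh (x i) ≤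
        A (i - 1) * Real.sinh (x i) + B (i - 1) * Real.cosh (x i)) :
    ∀ x' x'' : ℝ, x 0 ≤ x' → x' ≤ x'' → x'' ≤ x n →
      ∀ C D : ℝ, C * Real.cosh x' + D * Real.sinh x' = f x' →
        C * Real.cosh x'' + D * Real.sinh x'' = f x'' →
        ∀ y ∈ Set.Icc x' x'', C * Real.cosh y + D * Real.sinh y ≤ f y :=
  piecewise_F_neg_one_concave_general n x f A B hx hf hpiece hkink
end

section
/- Let two half-planes M⁻, M⁺ in H^3 share a geodesic line χ, let p ∈ χ, and suppose geodesic rays ψ⁻ ⊂ M⁻ and ψ⁺ ⊂ M⁺ from p form an intrinsically geodesic path in M⁻ ∪ M⁺, making angle γ ∈ (0, π) with χ. Let ψ be a geodesic ray from p inside the convex dihedral wedge spanned by M⁻ and M⁺, let M be the half-plane spanned by χ and ψ, let φ⁻, φ⁺ be the dihedral angles between M and M⁻, M⁺ respectively, β⁻, β⁺ the angles between ψ and ψ⁻, ψ⁺ respectively, and α the angle between ψ and χ. Set φ = φ⁻ + φ⁺ and β = β⁻ + β⁺. If for some α₀ ∈ (0, π/2) all of α, φ⁻, φ⁺, β⁻,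 β⁺ lie in [α₀, π - α₀], then π - φ ≤ (π - β)/(sin²α₀ · sin γ). -/
/-!
The two spherical cosine laws add up to
`cos β⁻ + cos β⁺ = sin γ · sin α · (cos φ⁻ + cos φ⁺)`, the `cos γ cos α` terms cancelling.
The left side is at most `π - β`, because `cos β⁻ + cos β⁺ = 2 cos s cos d` with
`s = β/2` and `|cos s| ≤ π/2 - s`. Since `sin ≥ sin α₀` on `[α₀, π - α₀]`, integrating `sin`
over `[φ⁻, π - φ⁺]` gives `cos φ⁻ + cos φ⁺ ≥ sin α₀ · (π - φ)`.
-/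

open Real

theorem Real.sin_le_sin_of_le_of_le_pi_sub {a y : ℝ} (ha : -(π / 2) ≤ a) (hay : a ≤ y)
    (hya : y ≤ π - a) : sin a ≤ sin y := by
  rcases le_total y (π / 2) with hy | hy
  · exact sin_le_sin_of_le_of_le_pi_div_two ha hy hay
  · rw [← sin_pi_sub y]
    exact sin_le_sin_of_le_of_le_pi_div_two ha (by linarith) (by linarith)

theorem Real.cos_add_cos_le_pi_sub_add {x y : ℝ} (h : x + y ≤ π) :
    cos x + cos y ≤ π - (x + y) := by
  have hcos : |cos ((x + y) / 2)| ≤ π / 2 - (x + y) / 2 := by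
    rw [← sin_pi_div_two_sub]
    exact (abs_sin_le_abs).trans (abs_of_nonneg (by linarith)).le
  have hprod : cos ((x + y) / 2) * cos ((x - y) / 2) ≤ |cos ((x + y) / 2)| := by
    refine (le_abs_self _).trans ?_
    rw [abs_mul]
    exact mul_le_of_le_one_right (abs_nonneg _) (abs_cos_le_one _)
  rw [cos_add_cos]
  linarith

theorem Real.sub_mul_sin_le_cos_sub_cos {a u v : ℝ} (ha : -(π / 2) ≤ a) (hau : a ≤ u)
    (huv : u ≤ v) (hva : v ≤ π - a) : (v - u) * sin a ≤ cos u - cos v := by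
  calc (v - u) * sin a = ∫ _ in u..v, sin a := by simp
    _ ≤ ∫ x in u..v, sin x :=
      intervalIntegral.integral_mono_on huv intervalIntegrable_const
        (continuous_sin.intervalIntegrable u v) fun x hx =>
          sin_le_sin_of_le_of_le_pi_sub ha (hau.trans hx.1) (hx.2.trans hva)
    _ = cos u - cos v := integral_sin

theorem Real.pi_sub_add_mul_sin_le_cos_add_cos {a x y : ℝ} (ha : -(π / 2) ≤ a) (hax : a ≤ x)
    (hay : a ≤ y) (hxy : x + y ≤ π) : (π - (x + y)) * sin a ≤ cos x + cos y := by
  have h := sub_mul_sin_le_cos_sub_cos ha hax (by linarith) (by linarith : π - y ≤ π - a)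
  rw [cos_pi_sub] at h
  linarith

/-- Two half-planes `M⁻, M⁺` in `H³` share a geodesic `χ`; rays `ψ⁻ ⊂ M⁻`, `ψ⁺ ⊂ M⁺` from
`p ∈ χ` form an intrinsic geodesic of `M⁻ ∪ M⁺` making angle `γ ∈ (0, π)` with `χ`; a ray
`ψ` from `p` in the convex wedge makes angle `α` with `χ` and angles `β⁻, β⁺` with
`ψ⁻, ψ⁺`; the half-plane `M` through `χ` and `ψ` makes dihedral angles `φ⁻, φ⁺` with
`M⁻, M⁺`.  In the spherical link of `p` these data satisfy the spherical cosine laws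
`cos β⁺ = cos γ cos α + sin γ sin α cos φ⁺` and
`cos β⁻ = -cos γ cos α + sin γ sin α cos φ⁻`, and `β = β⁻ + β⁺ ≤ π`.
If all of `α, φ⁻, φ⁺, β⁻, β⁺` lie in `[α₀, π - α₀]` for some `α₀ ∈ (0, π/2)`, then with
`φ = φ⁻ + φ⁺` we have `π - φ ≤ (π - β)/(sin²α₀ · sin γ)`. -/
theorem dihedral_angle_bound (γ α φm φp βm βp α₀ : ℝ)
    (hγ : γ ∈ Set.Ioo 0 π)
    (hα₀ : α₀ ∈ Set.Ioo 0 (π / 2))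
    (hcosp : Real.cos βp = Real.cos γ * Real.cos α + Real.sin γ * Real.sin α * Real.cos φp)
    (hcosm : Real.cos βm = -(Real.cos γ * Real.cos α) + Real.sin γ * Real.sin α * Real.cos φm)
    (hβ : βm + βp ≤ π)
    (hrange : ∀ x ∈ ({α, φm, φp, βm, βp} : Set ℝ), α₀ ≤ x ∧ x ≤ π - α₀) :
    π - (φm + φp) ≤ (π - (βm + βp)) / (Real.sin α₀ ^ 2 * Real.sin γ) := by
  obtain ⟨hα₀_pos, hα₀_lt⟩ := hα₀
  have hα₀_ge : -(π / 2) ≤ α₀ := by linarith [pi_pos]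
  obtain ⟨hα, hα'⟩ := hrange α (by simp)
  have hφm := (hrange φm (by simp)).1
  have hφp := (hrange φp (by simp)).1
  have hsinγ : 0 < sin γ := sin_pos_of_pos_of_lt_pi hγ.1 hγ.2
  have hsinα₀ : 0 < sin α₀ := sin_pos_of_pos_of_lt_pi hα₀_pos (by linarith)
  have hcosβ : sin γ * sin α * (cos φm + cos φp) ≤ π - (βm + βp) := by
    have := cos_add_cos_le_pi_sub_add hβ
    rw [hcosm, hcosp] at this
    linarith
  rw [le_div_iff₀ (by positivity)]
  rcases le_or_gt (φm + φp) π with hφ | hφ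
  · have hcosφ := pi_sub_add_mul_sin_le_cos_add_cos hα₀_ge hφm hφp hφ
    have hcosφ_nonneg : 0 ≤ cos φm + cos φp := (mul_nonneg (by linarith) hsinα₀.le).trans hcosφ
    calc (π - (φm + φp)) * (sin α₀ ^ 2 * sin γ)
        = sin γ * sin α₀ * ((π - (φm + φp)) * sin α₀) := by ring
      _ ≤ sin γ * sin α₀ * (cos φm + cos φp) := by gcongr
      _ ≤ sin γ * sin α * (cos φm + cos φp) := by
        gcongr
        exact sin_le_sin_of_le_of_le_pi_sub hα₀_ge hα hα'
      _ ≤ π - (βm + βp) := hcosβ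
  · exact (mul_nonpos_of_nonpos_of_nonneg (by linarith) (by positivity)).trans (by linarith)
end
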